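/- A finitely generated module M with finitely generated socle is supplemented if and only if it is δ-supplemented. -/

import Mathlib

open Submodule

section Defs

universe u v

variable (R : Type u) [Ring R]

/-- A submodule `L` is essential in `M` if it intersects every nonzero submodule nontrivially. -/
def IsEssentialSub {M : Type v} [AddCommGroup M] [Module R M] (L : Submodule R M) : Prop :=
  ∀ K : Submodule R M, K ≠ ⊥ → L ⊓ K ≠ ⊥

/-- A module is singular if it is isomorphic to `N ⧸ L` for some module `N` and
essential submodule `L ≤ N`. -/
def IsSingular (M : Type v) [AddCommGroup M] [Module R M] : Prop :=
  ∃ (N : Type v) (_ : AddCommGroup N) (_ : Module R N) (L : Submodule R N),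
    IsEssentialSub R L ∧ Nonempty ((N ⧸ L) ≃ₗ[R] M)

variable {M : Type v} [AddCommGroup M] [Module R M]

/-- `N` is small in `M`: `N + Z ≠ M` for every proper submodule `Z`. -/
def SmallSub (N : Submodule R M) : Prop :=
  ∀ Z : Submodule R M, Z ≠ ⊤ → N ⊔ Z ≠ ⊤

/-- `N` is δ-small in `M`: `N + Z ≠ M` for every proper submodule `Z` with `M ⧸ Z` singular. -/
def DeltaSmall (N : Submodule R M) : Prop :=
  ∀ Z : Submodule R M, Z ≠ ⊤ → IsSingular R (M ⧸ Z) → N ⊔ Z ≠ ⊤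

/-- `δ(M)`: the sum of all δ-small submodules of `M`. -/
def deltaRad : Submodule R M := sSup {N : Submodule R M | DeltaSmall R N}

/-- The radical: intersection of all maximal submodules. -/
def radM : Submodule R M := sInf {K : Submodule R M | IsCoatom K}

/-- The socle: sum of all simple submodules. -/
def socM : Submodule R M := sSup {S : Submodule R M | IsAtom S}

/-- `N` is a δ-supplement of `K` in `M`: `N + K = M` and `N ∩ K` is δ-small in `N`. -/
def IsDeltaSupplement (N K : Submodule R M) : Prop :=
  N ⊔ K = ⊤ ∧ DeltaSmall R ((N ⊓ K).comap N.subtype)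

/-- `N` is a δ-supplement submodule of `M`. -/
def IsDeltaSupplementSub (N : Submodule R M) : Prop :=
  ∃ K : Submodule R M, IsDeltaSupplement R N K

/-- `N` is a supplement of `K` in `M`: `N + K = M` and `N ∩ K` is small in `N`. -/
def IsSupplement (N K : Submodule R M) : Prop :=
  N ⊔ K = ⊤ ∧ SmallSub R ((N ⊓ K).comap N.subtype)

/-- `M` is δ-supplemented: every submodule has a δ-supplement. -/
def DeltaSupplemented (M : Type v) [AddCommGroup M] [Module R M] : Prop :=
  ∀ L : Submodule R M, ∃ N : Submodule R M, IsDeltaSupplement R N L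

/-- `M` is supplemented: every submodule has a supplement. -/
def Supplemented (M : Type v) [AddCommGroup M] [Module R M] : Prop :=
  ∀ L : Submodule R M, ∃ N : Submodule R M, IsSupplement R N L

/-- `N` is δ-coclosed in `M`: if `X ≤ N`, `N/X` is singular and `N/X ≪_δ M/X`, then `X = N`. -/
def DeltaCoclosed (N : Submodule R M) : Prop :=
  ∀ X : Submodule R M, X ≤ N →
    IsSingular R ↥(N.map X.mkQ) → DeltaSmall R (N.map X.mkQ) → X = N

/-- `N` is coclosed in `M`: if `X ≤ N` and `N/X ≪ M/X`, then `X = N`. -/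
def Coclosed (N : Submodule R M) : Prop :=
  ∀ X : Submodule R M, X ≤ N → SmallSub R (N.map X.mkQ) → X = N

/-- A module is local if it has a largest proper submodule. -/
def LocalModule (M : Type v) [AddCommGroup M] [Module R M] : Prop :=
  ∃ L : Submodule R M, L ≠ ⊤ ∧ ∀ K : Submodule R M, K ≠ ⊤ → K ≤ L

/-- `M` is δ-local if `δ(M)` is δ-small in `M` and `δ(M)` is a maximal submodule. -/
def DeltaLocal (M : Type v) [AddCommGroup M] [Module R M] : Prop :=
  DeltaSmall R (deltaRad R : Submodule R M) ∧ IsCoatom (deltaRad R : Submodule R M)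

end Defs


/-!
A δ-small submodule `X` of a module `N` that is not small splits off a simple summand lying
in `X`. Indeed, if `X + Z = N` with `Z` proper, choose `K ⊇ Z` maximal among the submodules
avoiding some `x ∈ X \ Z`. For `K < J < N` the image of `J` is essential in `N/K`, so `N/J` is
singular, which δ-smallness forbids: hence `K` is maximal. The simple module `N/K ≅ X/(X ∩ K)`
is not singular either, so `X ∩ K` is not essential in `X`, and a nonzero `Y ≤ X` with
`Y ∩ K = 0` gives `N = K ⊕ Y`.

Consequently a δ-supplement `N` of `L` that is not a supplement can be replaced by the
δ-supplement `K` (the projection of `N` onto `K` preserves δ-smallness), and `K ∩ Soc(M)` is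
strictly smaller than `N ∩ Soc(M)`. A finitely generated socle is semisimple of finite length,
hence Artinian, so the process ends with a supplement.
-/

section Development

universe u v

variable {R : Type u} [Ring R]

section Singular

variable {A B : Type v} [AddCommGroup A] [Module R A] [AddCommGroup B] [Module R B]

theorem IsSingular.of_linearEquiv (h : IsSingular R A) (e : A ≃ₗ[R] B) : IsSingular R B := by
  obtain ⟨N, _, _, L, hL, ⟨f⟩⟩ := h
  exact ⟨N, _, _, L, hL, ⟨f.trans e⟩⟩

theorem isSingular_of_surjective {f : A →ₗ[R] B} (hf : Function.Surjective f)
    (hker : IsEssentialSub R (LinearMap.ker f)) : IsSingular R B :=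
  ⟨A, _, _, _, hker, ⟨f.quotKerEquivOfSurjective hf⟩⟩

end Singular

namespace DeltaSmall

variable {W W' : Type v} [AddCommGroup W] [Module R W] [AddCommGroup W'] [Module R W']

theorem mono {X X' : Submodule R W} (hX : DeltaSmall R X) (hX' : X' ≤ X) : DeltaSmall R X' :=
  fun Z hZ hsing hsup => hX Z hZ hsing (top_unique (hsup ▸ sup_le_sup_right hX' Z))

theorem map_of_surjective {X : Submodule R W} (hX : DeltaSmall R X) {f : W →ₗ[R] W'}
    (hf : Function.Surjective f) : DeltaSmall R (X.map f) := by
  intro Z hZ hsing hsup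
  have hker : LinearMap.ker (Z.mkQ ∘ₗ f) = Z.comap f := by
    rw [LinearMap.ker_comp, Submodule.ker_mkQ]
  refine hX (Z.comap f) ?_ ?_ ?_
  · intro h
    apply hZ
    rw [← Submodule.map_comap_eq_of_surjective hf Z, h, Submodule.map_top,
      LinearMap.range_eq_top.mpr hf]
  · exact hsing.of_linearEquiv ((Submodule.quotEquivOfEq _ _ hker.symm).trans
      ((Z.mkQ ∘ₗ f).quotKerEquivOfSurjective (Z.mkQ_surjective.comp hf))).symm
  · have hker_le : LinearMap.ker f ≤ X ⊔ Z.comap f :=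
      (LinearMap.ker_le_comap f).trans le_sup_right
    rw [← sup_eq_left.mpr hker_le, ← Submodule.comap_map_eq, Submodule.map_sup,
      Submodule.map_comap_eq_of_surjective hf, hsup, Submodule.comap_top]

end DeltaSmall

section Coatom

variable {W : Type v} [AddCommGroup W] [Module R W]

theorem isSingular_quotient_of_forall_lt_mem {K J : Submodule R W} {x : W} (hxK : x ∉ K)
    (hK : ∀ J', K < J' → x ∈ J') (hKJ : K < J) : IsSingular R (W ⧸ J) := by
  refine ⟨W ⧸ K, _, _, J.map K.mkQ, fun T hT => ?_,
    ⟨K.quotientQuotientEquivQuotient J hKJ.le⟩⟩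
  have hKT : K < T.comap K.mkQ := by
    refine lt_of_le_of_ne (by simpa using LinearMap.ker_le_comap K.mkQ (p := T)) fun h => hT ?_
    rw [← Submodule.map_comap_eq_of_surjective K.mkQ_surjective T, ← h, Submodule.mkQ_map_self]
  have hx : K.mkQ x ∈ J.map K.mkQ ⊓ T := ⟨Submodule.mem_map_of_mem (hK J hKJ), hK _ hKT⟩
  rw [Submodule.ne_bot_iff]
  exact ⟨_, hx, by simpa using hxK⟩

theorem Submodule.exists_le_maximal_notMem {Z : Submodule R W} {x : W} (hx : x ∉ Z) :
    ∃ K, Z ≤ K ∧ Maximal (fun J : Submodule R W => x ∉ J) K := by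
  refine zorn_le_nonempty₀ {J | x ∉ J}
    (fun c hc hchain J hJ => ⟨sSup c, ?_, fun _ => le_sSup⟩) Z hx
  intro hxc
  obtain ⟨J', hJ'c, hxJ'⟩ :=
    (Submodule.mem_sSup_of_directed ⟨J, hJ⟩ hchain.directedOn).mp hxc
  exact hc hJ'c hxJ'

theorem DeltaSmall.exists_isCoatom_of_not_smallSub {X : Submodule R W} (hX : DeltaSmall R X)
    (hns : ¬ SmallSub R X) : ∃ K, IsCoatom K ∧ X ⊔ K = ⊤ := by
  simp only [SmallSub, not_forall, not_not] at hns
  obtain ⟨Z, hZ, hXZ⟩ := hns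
  obtain ⟨x, hxX, hxZ⟩ : ∃ x ∈ X, x ∉ Z :=
    SetLike.not_le_iff_exists.mp fun h => hZ (by rwa [sup_eq_right.mpr h] at hXZ)
  obtain ⟨K, hZK, hK⟩ := Submodule.exists_le_maximal_notMem hxZ
  have hXK : ∀ J, K ≤ J → X ⊔ J = ⊤ := fun J hKJ =>
    top_unique (hXZ ▸ sup_le_sup_left (hZK.trans hKJ) X)
  refine ⟨K, ⟨fun h => hK.prop (h ▸ Submodule.mem_top), fun J hKJ => ?_⟩, hXK K le_rfl⟩
  by_contra hJ
  exact hX J hJ (isSingular_quotient_of_forall_lt_mem hK.prop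
    (fun J' hKJ' => not_not.mp (hK.not_prop_of_gt hKJ')) hKJ) (hXK J hKJ.le)

theorem DeltaSmall.exists_isAtom_isCompl {X K : Submodule R W} (hX : DeltaSmall R X)
    (hK : IsCoatom K) (hXK : X ⊔ K = ⊤) : ∃ Y ≤ X, IsAtom Y ∧ IsCompl K Y := by
  by_cases hE : IsEssentialSub R (K.comap X.subtype)
  · have hsurj : Function.Surjective (K.mkQ ∘ₗ X.subtype) := by
      rw [← LinearMap.range_eq_top, LinearMap.range_comp, Submodule.range_subtype,
        Submodule.map_mkQ_eq_top, sup_comm, hXK]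
    have hker : LinearMap.ker (K.mkQ ∘ₗ X.subtype) = K.comap X.subtype := by
      rw [LinearMap.ker_comp, Submodule.ker_mkQ]
    exact (hX K hK.1 (isSingular_of_surjective hsurj (hker ▸ hE)) hXK).elim
  simp only [IsEssentialSub, not_forall, not_not] at hE
  obtain ⟨B, hB, hKB⟩ := hE
  set Y := B.map X.subtype
  have hKY : Disjoint K Y := by
    rw [Submodule.disjoint_def]
    rintro _ hyK ⟨y, hyB, rfl⟩
    have hy : y ∈ K.comap X.subtype ⊓ B := ⟨hyK, hyB⟩
    simpa [hKB] using hy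
  have hY : Y ≠ ⊥ := by
    rwa [Ne, ← Submodule.map_bot X.subtype,
      (Submodule.map_injective_of_injective X.injective_subtype).eq_iff]
  have hKY' : K ⊔ Y = ⊤ := hK.2 _ (left_lt_sup.mpr fun h => hY (hKY.symm.eq_bot_of_le h))
  have hcompl : IsCompl K Y := ⟨hKY, codisjoint_iff.mpr hKY'⟩
  exact ⟨Y, Submodule.map_subtype_le _ _, hcompl.symm.isAtom_iff_isCoatom.mpr hK, hcompl⟩

end Coatom

section Supplement

variable {M : Type v} [AddCommGroup M] [Module R M]

theorem IsSupplement.isDeltaSupplement {N L : Submodule R M} (h : IsSupplement R N L) :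
    IsDeltaSupplement R N L :=
  ⟨h.1, fun Z hZ _ => h.2 Z hZ⟩

theorem IsDeltaSupplement.exists_isDeltaSupplement_of_not_isSupplement
    {N L : Submodule R M} (h : IsDeltaSupplement R N L) (hns : ¬ IsSupplement R N L) :
    ∃ K Y : Submodule R M,
      IsDeltaSupplement R K L ∧ K ≤ N ∧ Y ≤ N ∧ IsAtom Y ∧ Disjoint K Y := by
  obtain ⟨hNL, hδ⟩ := h
  obtain ⟨Kw, hKw, hsup⟩ := hδ.exists_isCoatom_of_not_smallSub fun hs => hns ⟨hNL, hs⟩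
  obtain ⟨Yw, hYwX, hYw, hcompl⟩ := hδ.exists_isAtom_isCompl hKw hsup
  set K := Kw.map N.subtype
  set Y := Yw.map N.subtype
  have hKN : K ≤ N := Submodule.map_subtype_le _ _
  have hYL : Y ≤ L := by
    refine (Submodule.map_mono hYwX).trans ?_
    rw [Submodule.map_comap_subtype]
    exact inf_le_right.trans inf_le_right
  have hKY : K ⊔ Y = N := by
    rw [← Submodule.map_sup, hcompl.sup_eq_top, Submodule.map_top, Submodule.range_subtype]
  have hrange : LinearMap.range (Submodule.inclusion hKN) = Kw := by
    rw [Submodule.range_inclusion,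
      Submodule.comap_map_eq_of_injective N.injective_subtype]
  set π : N →ₗ[R] K := LinearMap.linearProjOfIsCompl Yw (Submodule.inclusion hKN)
    (Submodule.inclusion_injective hKN) (hrange ▸ hcompl)
  have hπ : Function.Surjective π := fun k => ⟨Submodule.inclusion hKN k,
    LinearMap.linearProjOfIsCompl_apply_left _ _ _ _ k⟩
  have hKL : (K ⊓ L).comap K.subtype ≤ ((N ⊓ L).comap N.subtype).map π := by
    rintro k ⟨-, hkL⟩
    exact ⟨Submodule.inclusion hKN k, ⟨hKN k.2, hkL⟩,
      LinearMap.linearProjOfIsCompl_apply_left _ _ _ _ k⟩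
  have : IsSimpleModule R Yw := isSimpleModule_iff_isAtom.mpr hYw
  refine ⟨K, Y, ⟨?_, (hδ.map_of_surjective hπ).mono hKL⟩, hKN, Submodule.map_subtype_le _ _,
    isSimpleModule_iff_isAtom.mp
      (IsSimpleModule.congr (Submodule.equivMapOfInjective _ N.injective_subtype Yw).symm),
    Submodule.disjoint_map N.injective_subtype hcompl.disjoint⟩
  rw [← hNL, ← hKY, sup_assoc, sup_eq_right.mpr hYL]

theorem isSemisimpleModule_socM : IsSemisimpleModule R (socM R : Submodule R M) := by
  rw [socM, sSup_eq_iSup]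
  exact isSemisimpleModule_biSup_of_isSemisimpleModule_submodule fun S hS =>
    have : IsSimpleModule R S := isSimpleModule_iff_isAtom.mpr hS
    inferInstance

theorem IsDeltaSupplement.exists_isSupplement [IsArtinian R (socM R : Submodule R M)]
    {N L : Submodule R M} (h : IsDeltaSupplement R N L) : ∃ N', IsSupplement R N' L := by
  set S : Submodule R M := socM R
  induction N using (InvImage.wf (fun N : Submodule R M => N.comap S.subtype)
    wellFounded_lt).induction with
  | _ N ih =>
    by_cases hs : IsSupplement R N L
    · exact ⟨N, hs⟩
    obtain ⟨K, Y, hK, hKN, hYN, hY, hKY⟩ := h.exists_isDeltaSupplement_of_not_isSupplement hs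
    refine ih K (SetLike.lt_iff_le_and_exists.mpr ⟨Submodule.comap_mono hKN, ?_⟩) hK
    obtain ⟨y, hyY, hy⟩ := Submodule.exists_mem_ne_zero_of_ne_bot hY.1
    have hyS : y ∈ S := (le_sSup hY : Y ≤ S) hyY
    exact ⟨⟨y, hyS⟩, hYN hyY, fun hyK => hy ((Submodule.disjoint_def.mp hKY) y hyK hyY)⟩

end Supplement

end Development

theorem supplemented_iff_deltaSupplemented_general {R : Type*} [Ring R] (M : Type*) [AddCommGroup M]
    [Module R M] (hsoc : (socM R : Submodule R M).FG) :
    Supplemented R M ↔ DeltaSupplemented R M := by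
  have : Module.Finite R (socM R : Submodule R M) := Module.Finite.iff_fg.mpr hsoc
  have : IsSemisimpleModule R (socM R : Submodule R M) := isSemisimpleModule_socM
  refine ⟨fun h L => ?_, fun h L => ?_⟩
  · obtain ⟨N, hN⟩ := h L
    exact ⟨N, hN.isDeltaSupplement⟩
  · obtain ⟨N, hN⟩ := h L
    exact hN.exists_isSupplement

theorem supplemented_iff_deltaSupplemented {R : Type*} [Ring R] (M : Type*) [AddCommGroup M]
    [Module R M] [Module.Finite R M] (hsoc : (socM R : Submodule R M).FG) :
    Supplemented R M ↔ DeltaSupplemented R M :=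
  supplemented_iff_deltaSupplemented_general M hsoc
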